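/- For every commutative ring R, every family w : ℤ → R, every integer ℓ ≥ 0 and every n ∈ ℤ, the identity A_{ℓ,0}(n) = A_{ℓ-1,-1}(n+1) + A_{ℓ-1,-1}(n) holds. (This is the coefficient form of the relation G_{n+1}(λ) = (A_{n+1}(λ) + A_n(λ) + 1)/λ between the series G_n(λ) = Σ_{ℓ≥0} A_{ℓ-1,0}(n−1) λ^{-ℓ-1} and A_n(λ) = Σ_{ℓ≥0} A_{ℓ-1,-1}(n) λ^{-ℓ-1}.) -/

import Mathlib

/-- Coefficients of the powers `P^ℓ = Σ_k (aAux w ℓ k n) Λ^k` of the difference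
operator `P = Λ + w_n Λ⁻¹` (natural-number power index `ℓ ≥ 0`). -/
def aAux {R : Type*} [CommRing R] (w : ℤ → R) : ℕ → ℤ → ℤ → R
  | 0, k, _ => if k = 0 then 1 else 0
  | l + 1, k, n => aAux w l (k - 1) n + w (n + k + 1) * aAux w l (k + 1) n

/-- `aCoef w ℓ k n` is `A_{ℓ,k}(n)`, the coefficient of `Λ^k` in `P^{ℓ+1}`,
for an integer `ℓ` (meaningful for `ℓ ≥ -1`). -/
def aCoef {R : Type*} [CommRing R] (w : ℤ → R) (l k n : ℤ) : R := aAux w (l + 1).toNat k n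

/-!
The defining recursion of `A_{ℓ,k}(n)` is the coefficient form of `P^{ℓ+1} = P^ℓ P`; that of
`P^{ℓ+1} = P P^ℓ` gives a second recursion. Comparing the two shows that the coefficients below
and above the diagonal are related by `A_{ℓ,-k}(n+k) = w_{n+1} ⋯ w_{n+k} A_{ℓ,k}(n)`, the
coefficient form of the symmetry of `P` with respect to the weights `w`. Splitting
`A_{ℓ,0}(n) = A_{ℓ-1,-1}(n) + w_{n+1} A_{ℓ-1,1}(n)` by the defining recursion, the case `k = 1`
of this relation turns the second summand into `A_{ℓ-1,-1}(n+1)`.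
-/

namespace aAux

variable {R : Type*} [CommRing R] (w : ℤ → R)

theorem succ (m : ℕ) (k n : ℤ) :
    aAux w (m + 1) k n = aAux w m (k - 1) n + w (n + k + 1) * aAux w m (k + 1) n := rfl

theorem succ' (m : ℕ) (k n : ℤ) :
    aAux w (m + 1) k n = aAux w m (k - 1) (n + 1) + w n * aAux w m (k + 1) (n - 1) := by
  induction m generalizing k n with
  | zero =>
    by_cases hk : k = -1
    · subst hk
      simp [aAux]
    · simp [aAux, show k + 1 ≠ 0 by omega]
  | succ m ih =>
    rw [succ w (m + 1), ih, ih, succ, succ]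
    ring_nf

theorem neg_add_eq_prod_mul (m k : ℕ) (n : ℤ) :
    aAux w m (-k) (n + k) = (∏ j ∈ Finset.range k, w (n + j + 1)) * aAux w m k n := by
  induction m generalizing k n with
  | zero =>
    rcases k with _ | k
    · simp [aAux]
    · simp only [aAux]
      rw [if_neg (by omega), if_neg (by omega), mul_zero]
  | succ m ih =>
    rcases k with _ | k
    · simp
    calc aAux w (m + 1) (-↑(k + 1)) (n + ↑(k + 1))
        = aAux w m (-↑(k + 2)) (n + ↑(k + 2)) + w (n + k + 1) * aAux w m (-k) (n + k) := by
          rw [succ']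
          push_cast
          ring_nf
      _ = (∏ j ∈ Finset.range (k + 2), w (n + j + 1)) * aAux w m ↑(k + 2) n
          + w (n + k + 1) * ((∏ j ∈ Finset.range k, w (n + j + 1)) * aAux w m k n) := by
          rw [ih, ih]
      _ = (∏ j ∈ Finset.range (k + 1), w (n + j + 1)) * aAux w (m + 1) ↑(k + 1) n := by
          rw [succ, Finset.prod_range_succ, Finset.prod_range_succ]
          push_cast
          ring_nf

theorem neg_one_add_one (m : ℕ) (n : ℤ) : aAux w m (-1) (n + 1) = w (n + 1) * aAux w m 1 n := by
  simpa using neg_add_eq_prod_mul w m 1 n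

end aAux

theorem G_eq_A (R : Type*) [CommRing R] (w : ℤ → R) (l : ℤ) (hl : 0 ≤ l) (n : ℤ) :
    aCoef w l 0 n = aCoef w (l - 1) (-1) (n + 1) + aCoef w (l - 1) (-1) n := by
  lift l to ℕ using hl with m
  have hsucc : ((m : ℤ) + 1).toNat = m + 1 := by omega
  have hpred : ((m : ℤ) - 1 + 1).toNat = m := by omega
  rw [aCoef, aCoef, aCoef, hsucc, hpred, aAux.succ, aAux.neg_one_add_one]
  simp only [zero_sub, zero_add, add_zero, add_comm]
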